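/- arXiv:2501.08297 — 2 statements merged into one kernel-verified Lean document; each statement's English description precedes it below -/
import Mathlib

section
/- Let n be a positive integer and let π : S → {1,…,n} assign to each index i in a subset S ⊆ {1,…,n} a parent π(i) ≠ i, with all other indices having no parent (this models a Tree Augmented Naive Bayes classifier, where each variable has at most one parent besides the class variable). Suppose we are given strictly positive reals p⁰_c for c ∈ {0,1}, strictly positive reals pⁱ_{(a_i, c)} for i ∉ S, a_i, c ∈ {0,1}, and strictly positive reals pⁱ_{(a_i, a_{π(i)}, c)} for i ∈ S and a_i, a_{π(i)}, c ∈ {0,1}. Define P(a, c) = p⁰_c · ∏_{i ∉ S} pⁱ_{(a_i, c)} · ∏_{i ∈ S} pⁱ_{(a_i, a_{π(i)}, c)} for a ∈ {0,1}ⁿ, c ∈ {0,1}. Then there exists a multilinear real polynomial p of degree at most 2 such that for every x ∈ {0,1}ⁿ, log(P(x,1)/P(x,0)) = p(x), and every degree-2 monomial of p is of the form x_i x_{π(i)} for some i ∈ S. -/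
open Finset

/-- Evaluation of a multilinear real polynomial in `n` variables given by its coefficient
function `c` (where `c S` is the coefficient of the monomial `∏ i ∈ S, x i`). -/
noncomputable def mEval {n : ℕ} (c : Finset (Fin n) → ℝ) (x : Fin n → ℝ) : ℝ :=
  ∑ S : Finset (Fin n), c S * ∏ i ∈ S, x i

/-- The real value of a Boolean. -/
noncomputable def bval (b : Bool) : ℝ := if b then 1 else 0

/-- A Tree Augmented Naive Bayes classifier (each variable has at most one parent `π i`
besides the class variable) with strictly positive conditional probabilities: the
log-odds `log (P(x,1) / P(x,0))` is given by a multilinear polynomial of degree at most 2,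
each of whose degree-2 monomials is of the form `x_i * x_{π i}` for some `i ∈ S`. -/
theorem tan_log_odds_is_qtf (n : ℕ) (hn : 0 < n) (S : Finset (Fin n))
    (π : Fin n → Fin n) (hπ : ∀ i ∈ S, π i ≠ i)
    (p0 : Bool → ℝ) (hp0 : ∀ c, 0 < p0 c)
    (pNo : Fin n → Bool → Bool → ℝ) (hpNo : ∀ i a c, 0 < pNo i a c)
    (pYes : Fin n → Bool → Bool → Bool → ℝ) (hpYes : ∀ i a b c, 0 < pYes i a b c)
    (P : (Fin n → Bool) → Bool → ℝ)
    (hP : ∀ a c, P a c =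
      p0 c * ∏ i, (if i ∈ S then pYes i (a i) (a (π i)) c else pNo i (a i) c)) :
    ∃ coef : Finset (Fin n) → ℝ,
      (∀ T, coef T ≠ 0 → T.card ≤ 2) ∧
      (∀ T, coef T ≠ 0 → T.card = 2 → ∃ i ∈ S, T = {i, π i}) ∧
      (∀ x : Fin n → Bool,
        Real.log (P x true / P x false) = mEval coef (fun i => bval (x i))) := by
  classical
  set g : Fin n → Bool → Bool → ℝ :=
    fun i a b => Real.log (pYes i a b true) - Real.log (pYes i a b false) with hg
  set f : Fin n → Bool → ℝ :=
    fun i a => Real.log (pNo i a true) - Real.log (pNo i a false) with hf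
  set c : Fin n → Finset (Fin n) → ℝ := fun i T =>
    if i ∈ S then
      (if T = ∅ then g i false false else 0)
      + (if T = {i} then g i true false - g i false false else 0)
      + (if T = {π i} then g i false true - g i false false else 0)
      + (if T = {i, π i} then
          g i true true - g i true false - g i false true + g i false false else 0)
    else
      (if T = ∅ then f i false else 0) + (if T = {i} then f i true - f i false else 0)
    with hc
  refine ⟨fun T =>
    (if T = ∅ then Real.log (p0 true) - Real.log (p0 false) else 0) + ∑ i, c i T,
    ?_, ?_, ?_⟩
  · intro T hT
    by_contra h
    push_neg at h
    have h0 : T ≠ ∅ := by rintro rfl; simp at h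
    have h1 : ∀ j : Fin n, T ≠ {j} := by
      rintro j rfl; simp at h
    have h2 : ∀ j k : Fin n, T ≠ {j, k} := by
      rintro j k rfl
      have := card_insert_le j ({k} : Finset (Fin n))
      simp at this
      omega
    apply hT
    simp [hc, h0, h1, h2]
  · intro T hT hcard
    have h0 : T ≠ ∅ := by rintro rfl; simp at hcard
    have h1 : ∀ j : Fin n, T ≠ {j} := by rintro j rfl; simp at hcard
    have hsum : ∑ i, c i T ≠ 0 := by
      intro hz; apply hT; simp [h0, hz]
    obtain ⟨i, -, hi⟩ := Finset.exists_ne_zero_of_sum_ne_zero hsum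
    by_cases hiS : i ∈ S
    · by_cases hT2 : T = {i, π i}
      · exact ⟨i, hiS, hT2⟩
      · exfalso; apply hi; simp [hc, hiS, h0, h1, hT2]
    · exfalso; apply hi; simp [hc, hiS, h0, h1]
  · intro x
    have hterm : ∀ (i : Fin n) (c' : Bool),
        (0:ℝ) < (if i ∈ S then pYes i (x i) (x (π i)) c' else pNo i (x i) c') := by
      intro i c'; split_ifs; exacts [hpYes _ _ _ _, hpNo _ _ _]
    have hPpos : ∀ c', 0 < P x c' := by
      intro c'; rw [hP]
      exact mul_pos (hp0 c') (Finset.prod_pos fun i _ => hterm i c')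
    have hlog : ∀ c', Real.log (P x c') = Real.log (p0 c') +
        ∑ i, Real.log (if i ∈ S then pYes i (x i) (x (π i)) c' else pNo i (x i) c') := by
      intro c'
      rw [hP, Real.log_mul (hp0 c').ne' (Finset.prod_pos fun i _ => hterm i c').ne',
        Real.log_prod]
      intro i _; exact (hterm i c').ne'
    rw [Real.log_div (hPpos true).ne' (hPpos false).ne', hlog, hlog]
    have h1 : ∑ i, (if i ∈ S then g i (x i) (x (π i)) else f i (x i))
        = (∑ i, Real.log (if i ∈ S then pYes i (x i) (x (π i)) true else pNo i (x i) true))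
          - ∑ i, Real.log (if i ∈ S then pYes i (x i) (x (π i)) false else pNo i (x i) false) := by
      rw [← Finset.sum_sub_distrib]
      refine Finset.sum_congr rfl fun i _ => ?_
      split_ifs <;> rfl
    have hLHS : Real.log (p0 true) + (∑ i, Real.log (if i ∈ S then pYes i (x i) (x (π i)) true else pNo i (x i) true))
        - (Real.log (p0 false) + ∑ i, Real.log (if i ∈ S then pYes i (x i) (x (π i)) false else pNo i (x i) false))
        = (Real.log (p0 true) - Real.log (p0 false)) +
          ∑ i, (if i ∈ S then g i (x i) (x (π i)) else f i (x i)) := by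
      rw [h1]; ring
    rw [hLHS]
    -- now compute RHS
    unfold mEval
    have hsplit : ∑ T : Finset (Fin n),
        ((if T = ∅ then Real.log (p0 true) - Real.log (p0 false) else 0) + ∑ i, c i T)
          * ∏ i ∈ T, bval (x i)
        = (Real.log (p0 true) - Real.log (p0 false))
          + ∑ i, ∑ T : Finset (Fin n), c i T * ∏ j ∈ T, bval (x j) := by
      rw [Finset.sum_congr rfl (fun T _ => add_mul _ _ _), Finset.sum_add_distrib]
      congr 1
      · rw [Finset.sum_congr rfl (fun T _ => ite_mul _ _ _ _)]
        simp [Finset.sum_ite_eq' Finset.univ (∅ : Finset (Fin n))]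
      · rw [← Finset.sum_comm]
        exact Finset.sum_congr rfl fun i _ => by rw [Finset.sum_mul]
    rw [hsplit]
    congr 1
    refine Finset.sum_congr rfl fun i _ => ?_
    by_cases hiS : i ∈ S
    · have hne : i ≠ π i := (hπ i hiS).symm
      have hcomp : ∀ T : Finset (Fin n), c i T * ∏ j ∈ T, bval (x j)
          = (if T = ∅ then g i false false * ∏ j ∈ T, bval (x j) else 0)
          + (if T = {i} then (g i true false - g i false false) * ∏ j ∈ T, bval (x j) else 0)
          + (if T = {π i} then (g i false true - g i false false) * ∏ j ∈ T, bval (x j) else 0)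
          + (if T = {i, π i} then
              (g i true true - g i true false - g i false true + g i false false) * ∏ j ∈ T, bval (x j) else 0) := by
        intro T
        simp only [hc, hiS, if_true]
        split_ifs <;> ring
      rw [Finset.sum_congr rfl fun T _ => hcomp T]
      simp only [Finset.sum_add_distrib]
      rw [Finset.sum_ite_eq' Finset.univ (∅ : Finset (Fin n)),
        Finset.sum_ite_eq' Finset.univ ({i} : Finset (Fin n)),
        Finset.sum_ite_eq' Finset.univ ({π i} : Finset (Fin n)),
        Finset.sum_ite_eq' Finset.univ ({i, π i} : Finset (Fin n))]
      simp only [Finset.mem_univ, if_true, Finset.prod_empty, Finset.prod_singleton,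
        Finset.prod_pair hne, hiS, if_true]
      cases hxi : x i <;> cases hxpi : x (π i) <;> simp [bval] <;> ring
    · have hcomp : ∀ T : Finset (Fin n), c i T * ∏ j ∈ T, bval (x j)
          = (if T = ∅ then f i false * ∏ j ∈ T, bval (x j) else 0)
          + (if T = {i} then (f i true - f i false) * ∏ j ∈ T, bval (x j) else 0) := by
        intro T
        simp only [hc, hiS, if_false]
        split_ifs <;> ring
      rw [Finset.sum_congr rfl fun T _ => hcomp T]
      simp only [Finset.sum_add_distrib]
      rw [Finset.sum_ite_eq' Finset.univ (∅ : Finset (Fin n)),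
        Finset.sum_ite_eq' Finset.univ ({i} : Finset (Fin n))]
      simp only [Finset.mem_univ, if_true, Finset.prod_empty, Finset.prod_singleton, hiS, if_false]
      cases hxi : x i <;> simp [bval] <;> ring
end

section
/- Let n = 2k with k ≥ 1, and define the Boolean function f_n : {0,1}ⁿ → {0,1} by f_n(x) = 1 if and only if |x| ≥ k+1, or (|x| ≥ k and for every j ∈ {1,…,k} not both x_{2j−1} = 1 and x_{2j} = 1), where |x| = Σᵢ xᵢ. Then f_n is a monotone Boolean function: if x ≤ y coordinatewise, then f_n(x) ≤ f_n(y). -/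
open Finset

/-- The weight (number of ones) of a Boolean vector. -/
def wt {n : ℕ} (x : Fin n → Bool) : ℕ := ∑ i, if x i then 1 else 0

lemma wt_mono {n : ℕ} {x y : Fin n → Bool} (h : ∀ i, x i ≤ y i) : wt x ≤ wt y := by
  unfold wt
  apply Finset.sum_le_sum
  intro i _
  have := h i
  cases hx : x i <;> cases hy : y i <;> simp_all [Bool.le_iff_imp]

lemma wt_strict {n : ℕ} {x y : Fin n → Bool} (h : ∀ i, x i ≤ y i) (i : Fin n)
    (hx : x i = false) (hy : y i = true) : wt x < wt y := by
  unfold wt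
  apply Finset.sum_lt_sum
  · intro j _
    have := h j
    cases hxj : x j <;> cases hyj : y j <;> simp_all [Bool.le_iff_imp]
  · exact ⟨i, Finset.mem_univ i, by simp [hx, hy]⟩

/-- The function `f_n` (with `n = 2k`), which is `1` iff `|x| ≥ k+1`, or `|x| ≥ k` and no
block `(x_{2j-1}, x_{2j})` consists of two ones, is a monotone Boolean function.
(Variables are indexed `0, …, 2k-1`; the `j`-th block consists of indices `2j, 2j+1`.) -/
theorem f_n_monotone (k : ℕ) (hk : 1 ≤ k) (f : (Fin (2 * k) → Bool) → Bool)
    (hf : ∀ x, f x = true ↔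
      (k + 1 ≤ wt x ∨ (k ≤ wt x ∧
        ∀ j : Fin k, ¬(x ⟨2 * j, by omega⟩ = true ∧ x ⟨2 * j + 1, by omega⟩ = true)))) :
    ∀ x y : Fin (2 * k) → Bool, (∀ i, x i ≤ y i) → f x ≤ f y := by
  intro x y hxy
  have hw : wt x ≤ wt y := wt_mono hxy
  cases hfx : f x with
  | false => simp
  | true =>
    suffices hfy : f y = true by simp [hfy]
    rw [hf y]
    have hx := (hf x).1 hfx
    rcases hx with h | ⟨h1, h2⟩
    · left; omega
    · by_cases hb : ∀ j : Fin k, ¬(y ⟨2 * j, by omega⟩ = true ∧ y ⟨2 * j + 1, by omega⟩ = true)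
      · right; exact ⟨le_trans h1 hw, hb⟩
      · left
        push_neg at hb
        obtain ⟨j, hj1, hj2⟩ := hb
        have hx' := h2 j
        have hcase : x ⟨2 * j, by omega⟩ = false ∨ x ⟨2 * j + 1, by omega⟩ = false := by
          by_contra hc
          push_neg at hc
          exact hx' ⟨by simpa using hc.1, by simpa using hc.2⟩
        have hlt : wt x < wt y := by
          rcases hcase with hc | hc
          · exact wt_strict hxy _ hc hj1
          · exact wt_strict hxy _ hc hj2
        omega
end
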